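/- arXiv:2105.13678 — 4 statements merged into one kernel-verified Lean document; each statement's English description precedes it below -/
import Mathlib

section
/- Let α > β ≥ 1 be integers. For every pair of distinct elements x₁, x₂ ∈ {0,…,2^α−1}, the number of pairs (b,c) with b, c ∈ {0,…,2^α−1}, b odd, such that ⌊((b·x₁ + c) mod 2^α)/2^(α−β)⌋ = ⌊((b·x₂ + c) mod 2^α)/2^(α−β)⌋ is at most 2^(−β)·2^(2α−1). That is, the modular arithmetic hash family MH is 2^(−β)-universal. -/
/-!
Write `x₁ - x₂ = 2 ^ s * w` with `w` odd; `s < α` since `x₁ ≢ x₂ (mod 2 ^ α)`. Let `g` be the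
bucket width `2 ^ (α - β)`, and for a key `(b, c)` let `u`, `v` be `b * x₁ + c`, `b * x₂ + c`
reduced mod `2 ^ α`. On a collision `u` and `v` share a bucket, so their offsets `t = u % g` and
`r = v % g` satisfy `t - r ≡ b * 2 ^ s * w ≡ 2 ^ s (mod 2 ^ (s + 1))`. This is impossible when
`g ≤ 2 ^ s`; otherwise `t` is determined by `r` and `t / 2 ^ (s + 1)`, and `u - v` determines
`b` modulo `2 ^ (α - s)`. Hence a colliding key is encoded injectively by
`(v, t / 2 ^ (s + 1), b / 2 ^ (α - s))`, so there are at most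
`2 ^ α * (g / 2 ^ (s + 1)) * 2 ^ s ≤ 2 ^ α * g / 2` collisions.
-/

open Finset

theorem Int.exists_eq_two_pow_mul_odd {z : ℤ} (hz : z ≠ 0) : ∃ s w, Odd w ∧ z = 2 ^ s * w := by
  obtain ⟨s, m, hm, hzm⟩ := Nat.exists_eq_two_pow_mul_odd (Int.natAbs_ne_zero.2 hz)
  rcases Int.natAbs_eq z with h | h
  · exact ⟨s, m, hm.natCast, by rw [h, hzm]; push_cast; ring⟩
  · exact ⟨s, -m, hm.natCast.neg, by rw [h, hzm]; push_cast; ring⟩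

theorem Int.ModEq.two_pow_of_two_pow_mul_odd {α s : ℕ} {d m : ℤ} (hs : s < α) (hm : Odd m)
    (h : d ≡ 2 ^ s * m [ZMOD 2 ^ α]) : d ≡ 2 ^ s [ZMOD 2 ^ (s + 1)] := by
  obtain ⟨k, rfl⟩ := hm
  refine (h.of_dvd (pow_dvd_pow 2 hs)).trans ?_
  rw [show (2 : ℤ) ^ s * (2 * k + 1) = 2 ^ s + 2 ^ (s + 1) * k by ring]
  exact Int.add_modulus_mul_modEq_iff.2 rfl

theorem Int.ModEq.of_mul_two_pow_mul_odd {α s : ℕ} {a b w : ℤ} (hs : s ≤ α) (hw : Odd w)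
    (h : a * (2 ^ s * w) ≡ b * (2 ^ s * w) [ZMOD 2 ^ α]) : a ≡ b [ZMOD 2 ^ (α - s)] := by
  rw [← Nat.add_sub_cancel' hs, pow_add] at h
  have h' : 2 ^ s * (a * w) ≡ 2 ^ s * (b * w) [ZMOD 2 ^ s * 2 ^ (α - s)] := by
    convert h using 1 <;> ring
  have hcop : IsCoprime ((2 : ℤ) ^ (α - s)) w := (Int.isCoprime_two_left.2 hw).pow_left
  have hw' := Int.modEq_iff_dvd.1 (Int.ModEq.mul_left_cancel' (by positivity) h')
  rw [← sub_mul] at hw'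
  exact Int.modEq_iff_dvd.2 (hcop.dvd_of_dvd_mul_right hw')

theorem mod_modEq_mod_add_two_pow_of_div_eq {α s u v g : ℕ} {m : ℤ} (hs : s < α) (hm : Odd m)
    (h : (u : ℤ) - v ≡ 2 ^ s * m [ZMOD 2 ^ α]) (huv : u / g = v / g) :
    ((u % g : ℕ) : ℤ) ≡ (v % g : ℕ) + 2 ^ s [ZMOD 2 ^ (s + 1)] := by
  have hu := Nat.div_add_mod u g
  have hv := Nat.div_add_mod v g
  have hdiff : (u : ℤ) - v = (u % g : ℕ) - (v % g : ℕ) := by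
    rw [huv] at hu; zify at hu hv ⊢; linarith
  have := (Int.ModEq.two_pow_of_two_pow_mul_odd hs hm (hdiff ▸ h)).add_right ((v % g : ℕ) : ℤ)
  rwa [sub_add_cancel, add_comm (2 ^ s : ℤ)] at this

theorem Nat.div_two_pow_succ_lt_of_modEq {e s t r : ℕ} (ht : t < 2 ^ e) (hr : r < 2 ^ e)
    (h : (t : ℤ) ≡ r + 2 ^ s [ZMOD 2 ^ (s + 1)]) : t / 2 ^ (s + 1) < 2 ^ e / 2 ^ (s + 1) := by
  rcases lt_or_ge s e with hse | hes
  · exact Nat.div_lt_div_of_lt_of_dvd (pow_dvd_pow 2 hse) ht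
  exfalso
  have htr : t = r := by
    have hs : (2 : ℤ) ^ s ≡ 0 [ZMOD 2 ^ e] := (pow_dvd_pow 2 hes).modEq_zero_int
    have h' : (t : ℤ) ≡ r [ZMOD 2 ^ e] := by
      simpa using (h.of_dvd (pow_dvd_pow 2 (by omega))).trans ((Int.ModEq.refl (r : ℤ)).add hs)
    exact (Int.natCast_modEq_iff.1 (by exact_mod_cast h')).eq_of_lt_of_lt ht hr
  subst htr
  have hdvd : (2 : ℤ) ^ (s + 1) ∣ 2 ^ s := by simpa using Int.modEq_iff_dvd.1 h
  have := Int.le_of_dvd (by positivity) hdvd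
  rw [pow_succ] at this
  linarith [pow_pos (two_pos : (0 : ℤ) < 2) s]

def collisions (α e x₁ x₂ : ℕ) : Finset (ℕ × ℕ) :=
  (range (2 ^ α) ×ˢ range (2 ^ α)).filter (fun bc : ℕ × ℕ => Odd bc.1 ∧
    (bc.1 * x₁ + bc.2) % 2 ^ α / 2 ^ e = (bc.1 * x₂ + bc.2) % 2 ^ α / 2 ^ e)

def collisionCode (α e s x₁ x₂ : ℕ) (bc : ℕ × ℕ) : ℕ × ℕ × ℕ :=
  ((bc.1 * x₂ + bc.2) % 2 ^ α, (bc.1 * x₁ + bc.2) % 2 ^ α % 2 ^ e / 2 ^ (s + 1),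
    bc.1 / 2 ^ (α - s))

theorem mul_add_mod_sub_mul_add_mod_modEq (α x₁ x₂ b c : ℕ) :
    (((b * x₁ + c) % 2 ^ α : ℕ) : ℤ) - ((b * x₂ + c) % 2 ^ α : ℕ)
      ≡ b * ((x₁ : ℤ) - x₂) [ZMOD 2 ^ α] := by
  have h := (Int.mod_modEq ((b * x₁ + c : ℕ) : ℤ) (2 ^ α)).sub
    (Int.mod_modEq ((b * x₂ + c : ℕ) : ℤ) (2 ^ α))
  push_cast at h ⊢
  convert h using 1
  ring

section
variable {α e s x₁ x₂ : ℕ} {w : ℤ}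

theorem modEq_of_mem_collisions (hs : s < α) (hw : Odd w) (hz : (x₁ : ℤ) - x₂ = 2 ^ s * w)
    {bc : ℕ × ℕ} (hbc : bc ∈ collisions α e x₁ x₂) :
    (((bc.1 * x₁ + bc.2) % 2 ^ α % 2 ^ e : ℕ) : ℤ)
      ≡ ((bc.1 * x₂ + bc.2) % 2 ^ α % 2 ^ e : ℕ) + 2 ^ s [ZMOD 2 ^ (s + 1)] := by
  obtain ⟨-, hb, hbucket⟩ := mem_filter.1 hbc
  refine mod_modEq_mod_add_two_pow_of_div_eq hs (hb.natCast.mul hw) ?_ hbucket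
  rw [mul_left_comm, ← hz]
  exact mul_add_mod_sub_mul_add_mod_modEq α x₁ x₂ bc.1 bc.2

theorem mapsTo_collisionCode (hs : s < α) (hw : Odd w) (hz : (x₁ : ℤ) - x₂ = 2 ^ s * w) :
    Set.MapsTo (collisionCode α e s x₁ x₂) (collisions α e x₁ x₂)
      (range (2 ^ α) ×ˢ range (2 ^ e / 2 ^ (s + 1)) ×ˢ range (2 ^ s) : Finset (ℕ × ℕ × ℕ)) := by
  intro bc hbc
  have hb : bc.1 < 2 ^ α := (mem_product.1 (mem_filter.1 hbc).1).1 |> mem_range.1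
  simp only [coe_product, coe_range, Set.mem_prod, Set.mem_Iio, collisionCode]
  refine ⟨Nat.mod_lt _ (by positivity),
    Nat.div_two_pow_succ_lt_of_modEq (Nat.mod_lt _ (by positivity)) (Nat.mod_lt _ (by positivity))
      (modEq_of_mem_collisions hs hw hz hbc), ?_⟩
  rw [Nat.div_lt_iff_lt_mul (by positivity), ← pow_add, Nat.add_sub_cancel' hs.le]
  exact hb

theorem injOn_collisionCode (hs : s < α) (hw : Odd w) (hz : (x₁ : ℤ) - x₂ = 2 ^ s * w) :
    Set.InjOn (collisionCode α e s x₁ x₂) (collisions α e x₁ x₂) := by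
  rintro ⟨b, c⟩ hbc ⟨b', c'⟩ hbc' hcode
  simp only [collisionCode, Prod.mk.injEq] at hcode
  obtain ⟨hv, ht, hq⟩ := hcode
  obtain ⟨hr, -, hbucket⟩ := mem_filter.1 hbc
  obtain ⟨hr', -, hbucket'⟩ := mem_filter.1 hbc'
  have hoffset : (b * x₁ + c) % 2 ^ α % 2 ^ e = (b' * x₁ + c') % 2 ^ α % 2 ^ e := by
    have h := modEq_of_mem_collisions hs hw hz hbc
    have h' := modEq_of_mem_collisions hs hw hz hbc'
    dsimp only at h h' hv
    rw [hv] at h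
    exact (Nat.modEq_iff_eq_of_div_eq ht).1
      (Int.natCast_modEq_iff.1 (by exact_mod_cast h.trans h'.symm))
  have hu : (b * x₁ + c) % 2 ^ α = (b' * x₁ + c') % 2 ^ α :=
    Nat.ext_div_modEq (by rw [hbucket, hbucket', hv]) hoffset
  have hb : b = b' := by
    have h := mul_add_mod_sub_mul_add_mod_modEq α x₁ x₂ b c
    rw [hu, hv] at h
    replace h := h.symm.trans (mul_add_mod_sub_mul_add_mod_modEq α x₁ x₂ b' c')
    rw [hz] at h
    exact Nat.ext_div_modEq hq
      (Int.natCast_modEq_iff.1 (by exact_mod_cast h.of_mul_two_pow_mul_odd hs.le hw))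
  subst hb
  have hc : c ≡ c' [MOD 2 ^ α] := Nat.ModEq.add_left_cancel' (b * x₂) hv
  simp only [mem_product, mem_range] at hr hr'
  rw [hc.eq_of_lt_of_lt hr.2 hr'.2]

end

theorem two_mul_card_collisions_le {α e x₁ x₂ : ℕ} (hx : ¬ x₁ ≡ x₂ [MOD 2 ^ α]) :
    2 * (collisions α e x₁ x₂).card ≤ 2 ^ α * 2 ^ e := by
  have hz0 : (x₁ : ℤ) - x₂ ≠ 0 := by
    rw [sub_ne_zero, Ne, Nat.cast_inj]
    rintro rfl
    exact hx rfl
  obtain ⟨s, w, hw, hz⟩ := Int.exists_eq_two_pow_mul_odd hz0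
  have hs : s < α := by
    by_contra! h
    refine hx (Nat.modEq_iff_dvd.2 (dvd_sub_comm.1 ?_))
    push_cast
    exact hz ▸ (pow_dvd_pow 2 h).mul_right w
  calc 2 * (collisions α e x₁ x₂).card
      ≤ 2 * (range (2 ^ α) ×ˢ range (2 ^ e / 2 ^ (s + 1)) ×ˢ range (2 ^ s)).card := by
        gcongr
        exact card_le_card_of_injOn _ (mapsTo_collisionCode hs hw hz) (injOn_collisionCode hs hw hz)
    _ = 2 ^ α * (2 ^ e / 2 ^ (s + 1) * 2 ^ (s + 1)) := by
        simp only [card_product, card_range, pow_succ]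
        ring
    _ ≤ 2 ^ α * 2 ^ e := Nat.mul_le_mul_left _ (Nat.div_mul_le_self _ _)

theorem mh_delta_universal_general (α β : ℕ) (hβα : β < α)
    (x₁ x₂ : ℕ) (hx₁ : x₁ < 2 ^ α) (hx₂ : x₂ < 2 ^ α) (hne : x₁ ≠ x₂) :
    (((Finset.range (2 ^ α) ×ˢ Finset.range (2 ^ α)).filter
        (fun bc : ℕ × ℕ => Odd bc.1 ∧
          (bc.1 * x₁ + bc.2) % 2 ^ α / 2 ^ (α - β)
            = (bc.1 * x₂ + bc.2) % 2 ^ α / 2 ^ (α - β))).card : ℝ)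
      ≤ (2 : ℝ) ^ (-(β : ℤ)) * 2 ^ (2 * α - 1) := by
  have hcard : (2 * (collisions α (α - β) x₁ x₂).card : ℝ) ≤ 2 ^ α * 2 ^ (α - β) := by
    exact_mod_cast two_mul_card_collisions_le fun h => hne (h.eq_of_lt_of_lt hx₁ hx₂)
  have hbound : (2 : ℝ) ^ α * 2 ^ (α - β) = 2 * ((2 : ℝ) ^ (-(β : ℤ)) * 2 ^ (2 * α - 1)) := by
    rw [zpow_neg, zpow_natCast, mul_left_comm, ← pow_succ', Nat.sub_add_cancel (by omega),
      eq_inv_mul_iff_mul_eq₀ (by positivity), ← pow_add, ← pow_add]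
    congr 1
    omega
  change ((collisions α (α - β) x₁ x₂).card : ℝ) ≤ _
  linarith

/-- MH is 2^(−β)-universal: for integers `α > β ≥ 1` and distinct
`x₁ x₂ ∈ {0, …, 2^α − 1}`, the number of pairs `(b, c)` with
`b, c ∈ {0, …, 2^α − 1}`, `b` odd, such that
`⌊((b·x₁ + c) mod 2^α) / 2^(α−β)⌋ = ⌊((b·x₂ + c) mod 2^α) / 2^(α−β)⌋`
is at most `2^(−β) · 2^(2α−1)`. -/
theorem mh_delta_universal (α β : ℕ) (hβ : 1 ≤ β) (hβα : β < α)
    (x₁ x₂ : ℕ) (hx₁ : x₁ < 2 ^ α) (hx₂ : x₂ < 2 ^ α) (hne : x₁ ≠ x₂) :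
    (((Finset.range (2 ^ α) ×ˢ Finset.range (2 ^ α)).filter
        (fun bc : ℕ × ℕ => Odd bc.1 ∧
          (bc.1 * x₁ + bc.2) % 2 ^ α / 2 ^ (α - β)
            = (bc.1 * x₂ + bc.2) % 2 ^ α / 2 ^ (α - β))).card : ℝ)
      ≤ (2 : ℝ) ^ (-(β : ℤ)) * 2 ^ (2 * α - 1) :=
  mh_delta_universal_general α β hβα x₁ x₂ hx₁ hx₂ hne
end

section
/- Let p be a probability distribution on a finite nonempty set Y and let u be the uniform distribution on Y. Then the statistical distance between p and u satisfies d(p, u) ≤ (1/2)·√(Δ_p·|Y| − 1). -/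
/-! Cauchy–Schwarz bounds the ℓ¹ distance from `p` to uniform by `√|Y|` times the ℓ² distance, and
since `∑ p = 1` the squared ℓ² distance is `Δ_p − 1/|Y|`. -/

open Finset

theorem sum_abs_le_sqrt_card_mul_sum_sq {ι : Type*} (s : Finset ι) (f : ι → ℝ) :
    ∑ i ∈ s, |f i| ≤ √(#s * ∑ i ∈ s, f i ^ 2) :=
  Real.le_sqrt_of_sq_le <| by
    simpa only [sq_abs] using sq_sum_le_card_mul_sum_sq (s := s) (f := fun i => |f i|)

theorem card_mul_sum_sq_sub_inv_card {Y : Type*} [Fintype Y] (p : Y → ℝ) (h1 : ∑ y, p y = 1) :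
    Fintype.card Y * ∑ y, (p y - 1 / (Fintype.card Y : ℝ)) ^ 2
      = (∑ y, p y ^ 2) * Fintype.card Y - 1 := by
  have : Nonempty Y := by
    by_contra h
    rw [not_nonempty_iff] at h
    simp at h1
  have hn : (Fintype.card Y : ℝ) ≠ 0 := by positivity
  simp only [sub_sq, sum_add_distrib, sum_sub_distrib, ← sum_mul, ← mul_sum, h1, sum_const,
    card_univ, nsmul_eq_mul]
  field_simp
  ring

theorem dist_to_uniform_le_general {Y : Type*} [Fintype Y]
    (p : Y → ℝ) (h1 : ∑ y, p y = 1) :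
    (1 / 2) * ∑ y : Y, |p y - 1 / (Fintype.card Y : ℝ)|
      ≤ (1 / 2) * Real.sqrt ((∑ y : Y, (p y) ^ 2) * Fintype.card Y - 1) := by
  gcongr
  calc ∑ y, |p y - 1 / (Fintype.card Y : ℝ)|
      ≤ √(Fintype.card Y * ∑ y, (p y - 1 / (Fintype.card Y : ℝ)) ^ 2) :=
        sum_abs_le_sqrt_card_mul_sum_sq univ _
    _ = √((∑ y, p y ^ 2) * Fintype.card Y - 1) := by rw [card_mul_sum_sq_sub_inv_card p h1]

/-- Statistical distance from uniform is controlled by the collision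
probability: for a probability distribution `p` on a finite nonempty set `Y`,
`d(p, u) ≤ (1/2)·√(Δ_p · |Y| − 1)` where `u` is the uniform distribution. -/
theorem dist_to_uniform_le {Y : Type*} [Fintype Y] [Nonempty Y]
    (p : Y → ℝ) (h0 : ∀ y, 0 ≤ p y) (h1 : ∑ y, p y = 1) :
    (1 / 2) * ∑ y : Y, |p y - 1 / (Fintype.card Y : ℝ)|
      ≤ (1 / 2) * Real.sqrt ((∑ y : Y, (p y) ^ 2) * Fintype.card Y - 1) :=
  dist_to_uniform_le_general p h1
end

section
/- In the setting of the previous corollary, suppose additionally that |X| = 2^n, |W| = 2^t, |Z| = 2^m, δ₂ ≤ 2^(−m), and δ₁ ≤ δ_g for some real δ_g > 0, where n, t, m are natural numbers with t + m ≤ n. Then the average statistical distance of the output distribution from the uniform distribution on Z is at most (1/2)·√(2^(m+t−n) + 2^m·δ_g). In particular, writing s = n − t − m (the security coefficient), if moreover 2^m·δ_g ≤ 2^(−s), then the average statistical distance is at most 2^(−(s+1)/2); i.e., the output key is ε-secure with ε ≤ 2^(−(s+1)/2). -/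
open Finset


/-- Cauchy–Schwarz / Jensen for sqrt: weighted sum of sqrts. -/
lemma my_sum_sqrt_le {κ : Type*} (s : Finset κ) (lam a : κ → ℝ)
    (hlam : ∀ k ∈ s, 0 ≤ lam k) (ha : ∀ k ∈ s, 0 ≤ a k)
    (hsum : ∑ k ∈ s, lam k ≤ 1) :
    ∑ k ∈ s, lam k * Real.sqrt (a k) ≤ Real.sqrt (∑ k ∈ s, lam k * a k) := by
  have h0 : 0 ≤ ∑ k ∈ s, lam k * Real.sqrt (a k) :=
    Finset.sum_nonneg fun k hk => mul_nonneg (hlam k hk) (Real.sqrt_nonneg _)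
  have hla : 0 ≤ ∑ k ∈ s, lam k * a k :=
    Finset.sum_nonneg fun k hk => mul_nonneg (hlam k hk) (ha k hk)
  have key : (∑ k ∈ s, lam k * Real.sqrt (a k))^2 ≤ ∑ k ∈ s, lam k * a k := by
    have hcs := Finset.sum_mul_sq_le_sq_mul_sq s (fun k => Real.sqrt (lam k))
      (fun k => Real.sqrt (lam k * a k))
    have e1 : ∀ k ∈ s, Real.sqrt (lam k) * Real.sqrt (lam k * a k)
        = lam k * Real.sqrt (a k) := by
      intro k hk
      rw [Real.sqrt_mul (hlam k hk), ← mul_assoc, Real.mul_self_sqrt (hlam k hk)]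
    rw [Finset.sum_congr rfl e1] at hcs
    have e2 : ∀ k ∈ s, Real.sqrt (lam k) ^ 2 = lam k := fun k hk => Real.sq_sqrt (hlam k hk)
    have e3 : ∀ k ∈ s, Real.sqrt (lam k * a k) ^ 2 = lam k * a k := fun k hk =>
      Real.sq_sqrt (mul_nonneg (hlam k hk) (ha k hk))
    rw [Finset.sum_congr rfl e2, Finset.sum_congr rfl e3] at hcs
    calc (∑ k ∈ s, lam k * Real.sqrt (a k))^2
        ≤ (∑ k ∈ s, lam k) * (∑ k ∈ s, lam k * a k) := hcs
      _ ≤ 1 * (∑ k ∈ s, lam k * a k) := mul_le_mul_of_nonneg_right hsum hla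
      _ = ∑ k ∈ s, lam k * a k := one_mul _
  calc ∑ k ∈ s, lam k * Real.sqrt (a k)
      = Real.sqrt ((∑ k ∈ s, lam k * Real.sqrt (a k))^2) := (Real.sqrt_sq h0).symm
    _ ≤ Real.sqrt (∑ k ∈ s, lam k * a k) := Real.sqrt_le_sqrt key

/-- Statistical distance bounded by collision probability. -/
lemma my_statdist_le {Z : Type*} [Fintype Z] [Nonempty Z] (q : Z → ℝ)
    (hq : ∑ z : Z, q z = 1) :
    ∑ z : Z, |q z - 1 / (Fintype.card Z : ℝ)|
      ≤ Real.sqrt ((Fintype.card Z : ℝ) * ∑ z : Z, (q z)^2 - 1) := by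
  set N : ℝ := (Fintype.card Z : ℝ) with hN
  have hNpos : (0:ℝ) < N := by
    rw [hN]; exact_mod_cast Fintype.card_pos (α := Z)
  have hd2 : ∑ z : Z, (q z - 1/N)^2 = ∑ z : Z, (q z)^2 - 1/N := by
    have : ∀ z : Z, (q z - 1/N)^2 = (q z)^2 - (2/N) * q z + 1/N^2 := by
      intro z; ring
    rw [Finset.sum_congr rfl (fun z _ => this z)]
    rw [Finset.sum_add_distrib, Finset.sum_sub_distrib, ← Finset.mul_sum, hq,
      Finset.sum_const, Finset.card_univ]
    rw [nsmul_eq_mul, ← hN]; field_simp; ring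
  have hcs := Finset.sum_mul_sq_le_sq_mul_sq (univ : Finset Z) (fun _ => (1:ℝ))
    (fun z => |q z - 1/N|)
  simp only [one_mul, one_pow, Finset.sum_const, Finset.card_univ, nsmul_eq_mul, mul_one,
    sq_abs, ← hN] at hcs
  rw [hd2] at hcs
  have h0 : 0 ≤ ∑ z : Z, |q z - 1/N| := Finset.sum_nonneg fun z _ => abs_nonneg _
  have key : (∑ z : Z, |q z - 1/N|)^2 ≤ N * ∑ z : Z, (q z)^2 - 1 := by
    calc (∑ z : Z, |q z - 1/N|)^2 ≤ N * (∑ z : Z, (q z)^2 - 1/N) := hcs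
      _ = N * ∑ z : Z, (q z)^2 - 1 := by field_simp
  calc ∑ z : Z, |q z - 1/N| = Real.sqrt ((∑ z : Z, |q z - 1/N|)^2) := (Real.sqrt_sq h0).symm
    _ ≤ _ := Real.sqrt_le_sqrt key

lemma my_sq_card_fiber {X Z : Type*} [Fintype Z] [DecidableEq Z] (g : X → Z) (s : Finset X) :
    ∑ z : Z, ((s.filter (fun x => g x = z)).card : ℝ)^2
      = ∑ x₁ ∈ s, ∑ x₂ ∈ s, if g x₁ = g x₂ then (1:ℝ) else 0 := by
  have hcard : ∀ z : Z, ((s.filter (fun x => g x = z)).card : ℝ)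
      = ∑ x ∈ s, if g x = z then (1:ℝ) else 0 := by
    intro z; rw [Finset.card_filter]; push_cast; rfl
  calc ∑ z : Z, ((s.filter (fun x => g x = z)).card : ℝ)^2
      = ∑ z : Z, ∑ x₁ ∈ s, ∑ x₂ ∈ s,
          (if g x₁ = z then (1:ℝ) else 0) * (if g x₂ = z then (1:ℝ) else 0) := by
        refine Finset.sum_congr rfl fun z _ => ?_
        rw [hcard, sq, Finset.sum_mul_sum]
    _ = ∑ x₁ ∈ s, ∑ x₂ ∈ s, ∑ z : Z,
          (if g x₁ = z then (1:ℝ) else 0) * (if g x₂ = z then (1:ℝ) else 0) := by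
        rw [Finset.sum_comm]
        exact Finset.sum_congr rfl fun x₁ _ => Finset.sum_comm
    _ = ∑ x₁ ∈ s, ∑ x₂ ∈ s, if g x₁ = g x₂ then (1:ℝ) else 0 := by
        refine Finset.sum_congr rfl fun x₁ _ => Finset.sum_congr rfl fun x₂ _ => ?_
        simp only [ite_mul, one_mul, zero_mul]
        rw [Finset.sum_ite_eq (univ : Finset Z) (g x₁) (fun z => if g x₂ = z then (1:ℝ) else 0)]
        simp [eq_comm]

lemma my_pair_collision {X Y Z ι₁ ι₂ : Type*} [Fintype ι₁] [Fintype ι₂]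
    [DecidableEq Y] [DecidableEq Z]
    (f₁ : ι₁ → X → Y) (f₂ : ι₂ → Y → Z) (d1 d2 : ℝ) (hd2 : 0 ≤ d2)
    (h₁ : ∀ x₁ x₂ : X, x₁ ≠ x₂ →
      ((univ.filter (fun i : ι₁ => f₁ i x₁ = f₁ i x₂)).card : ℝ) ≤ d1 * Fintype.card ι₁)
    (h₂ : ∀ y₁ y₂ : Y, y₁ ≠ y₂ →
      ((univ.filter (fun j : ι₂ => f₂ j y₁ = f₂ j y₂)).card : ℝ) ≤ d2 * Fintype.card ι₂)
    (x₁ x₂ : X) (hne : x₁ ≠ x₂) :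
    ∑ i : ι₁, ∑ j : ι₂, (if f₂ j (f₁ i x₁) = f₂ j (f₁ i x₂) then (1:ℝ) else 0)
      ≤ (d1 + d2) * ((Fintype.card ι₁ : ℝ) * Fintype.card ι₂) := by
  set A : Finset ι₁ := univ.filter (fun i => f₁ i x₁ = f₁ i x₂) with hA
  have hinner : ∀ i : ι₁, ∑ j : ι₂, (if f₂ j (f₁ i x₁) = f₂ j (f₁ i x₂) then (1:ℝ) else 0)
      = ((univ.filter (fun j : ι₂ => f₂ j (f₁ i x₁) = f₂ j (f₁ i x₂))).card : ℝ) := by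
    intro i; rw [Finset.card_filter]; push_cast; rfl
  have split : ∑ i ∈ A, (∑ j : ι₂, (if f₂ j (f₁ i x₁) = f₂ j (f₁ i x₂) then (1:ℝ) else 0))
      + ∑ i ∈ univ.filter (fun i => ¬ f₁ i x₁ = f₁ i x₂),
          (∑ j : ι₂, (if f₂ j (f₁ i x₁) = f₂ j (f₁ i x₂) then (1:ℝ) else 0))
      = ∑ i : ι₁, ∑ j : ι₂, (if f₂ j (f₁ i x₁) = f₂ j (f₁ i x₂) then (1:ℝ) else 0) :=
    Finset.sum_filter_add_sum_filter_not _ _ _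
  rw [← split]
  have b1 : ∑ i ∈ A, (∑ j : ι₂, (if f₂ j (f₁ i x₁) = f₂ j (f₁ i x₂) then (1:ℝ) else 0))
      ≤ d1 * Fintype.card ι₁ * Fintype.card ι₂ := by
    calc ∑ i ∈ A, (∑ j : ι₂, (if f₂ j (f₁ i x₁) = f₂ j (f₁ i x₂) then (1:ℝ) else 0))
        ≤ ∑ i ∈ A, (Fintype.card ι₂ : ℝ) := by
          refine Finset.sum_le_sum fun i _ => ?_
          calc ∑ j : ι₂, (if f₂ j (f₁ i x₁) = f₂ j (f₁ i x₂) then (1:ℝ) else 0)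
              ≤ ∑ j : ι₂, (1:ℝ) := Finset.sum_le_sum fun j _ => by split <;> norm_num
            _ = (Fintype.card ι₂ : ℝ) := by simp
      _ = (A.card : ℝ) * Fintype.card ι₂ := by rw [Finset.sum_const, nsmul_eq_mul]
      _ ≤ d1 * Fintype.card ι₁ * Fintype.card ι₂ := by
          have := h₁ x₁ x₂ hne
          exact mul_le_mul_of_nonneg_right this (by positivity)
  have b2 : ∑ i ∈ univ.filter (fun i => ¬ f₁ i x₁ = f₁ i x₂),
        (∑ j : ι₂, (if f₂ j (f₁ i x₁) = f₂ j (f₁ i x₂) then (1:ℝ) else 0))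
      ≤ (Fintype.card ι₁ : ℝ) * (d2 * Fintype.card ι₂) := by
    calc ∑ i ∈ univ.filter (fun i => ¬ f₁ i x₁ = f₁ i x₂),
          (∑ j : ι₂, (if f₂ j (f₁ i x₁) = f₂ j (f₁ i x₂) then (1:ℝ) else 0))
        ≤ ∑ _i ∈ univ.filter (fun i => ¬ f₁ i x₁ = f₁ i x₂), d2 * (Fintype.card ι₂ : ℝ) := by
          refine Finset.sum_le_sum fun i hi => ?_
          rw [Finset.mem_filter] at hi
          rw [hinner i]
          exact h₂ _ _ hi.2
      _ = ((univ.filter (fun i => ¬ f₁ i x₁ = f₁ i x₂)).card : ℝ) * (d2 * Fintype.card ι₂) := by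
          rw [Finset.sum_const, nsmul_eq_mul]
      _ ≤ (Fintype.card ι₁ : ℝ) * (d2 * Fintype.card ι₂) := by
          refine mul_le_mul_of_nonneg_right ?_ (by positivity)
          exact_mod_cast Finset.card_le_card (Finset.filter_subset _ _)
  calc _ ≤ d1 * Fintype.card ι₁ * Fintype.card ι₂
        + (Fintype.card ι₁ : ℝ) * (d2 * Fintype.card ι₂) := add_le_add b1 b2
    _ = (d1 + d2) * ((Fintype.card ι₁ : ℝ) * Fintype.card ι₂) := by ring

lemma my_sum_fiber_card {X Z : Type*} [Fintype Z] [DecidableEq Z] (g : X → Z) (s : Finset X) :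
    ∑ z : Z, (s.filter (fun x => g x = z)).card = s.card :=
  (Finset.card_eq_sum_card_fiberwise (fun x _ => Finset.mem_univ (g x))).symm

lemma my_collision_sum {X Y Z ι₁ ι₂ : Type*} [Fintype Z] [Fintype ι₁] [Fintype ι₂]
    [DecidableEq Y] [DecidableEq Z]
    (f₁ : ι₁ → X → Y) (f₂ : ι₂ → Y → Z) (d1 d2 : ℝ) (hd1 : 0 ≤ d1) (hd2 : 0 ≤ d2)
    (h₁ : ∀ x₁ x₂ : X, x₁ ≠ x₂ →
      ((univ.filter (fun i : ι₁ => f₁ i x₁ = f₁ i x₂)).card : ℝ) ≤ d1 * Fintype.card ι₁)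
    (h₂ : ∀ y₁ y₂ : Y, y₁ ≠ y₂ →
      ((univ.filter (fun j : ι₂ => f₂ j y₁ = f₂ j y₂)).card : ℝ) ≤ d2 * Fintype.card ι₂)
    (s : Finset X) :
    ∑ i : ι₁, ∑ j : ι₂, ∑ z : Z, ((s.filter (fun x => f₂ j (f₁ i x) = z)).card : ℝ)^2
      ≤ ((s.card : ℝ) + (s.card : ℝ)^2 * (d1 + d2))
          * ((Fintype.card ι₁ : ℝ) * Fintype.card ι₂) := by
  classical
  set G : ι₁ → ι₂ → X → X → ℝ :=
    fun i j x₁ x₂ => if f₂ j (f₁ i x₁) = f₂ j (f₁ i x₂) then (1:ℝ) else 0 with hG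
  have swap : ∑ i : ι₁, ∑ j : ι₂, ∑ z : Z, ((s.filter (fun x => f₂ j (f₁ i x) = z)).card : ℝ)^2
      = ∑ x₁ ∈ s, ∑ x₂ ∈ s, ∑ i : ι₁, ∑ j : ι₂, G i j x₁ x₂ := by
    calc ∑ i : ι₁, ∑ j : ι₂, ∑ z : Z, ((s.filter (fun x => f₂ j (f₁ i x) = z)).card : ℝ)^2
        = ∑ i : ι₁, ∑ j : ι₂, ∑ x₁ ∈ s, ∑ x₂ ∈ s, G i j x₁ x₂ :=
          Finset.sum_congr rfl fun i _ => Finset.sum_congr rfl fun j _ =>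
            my_sq_card_fiber (fun x => f₂ j (f₁ i x)) s
      _ = ∑ i : ι₁, ∑ x₁ ∈ s, ∑ j : ι₂, ∑ x₂ ∈ s, G i j x₁ x₂ :=
          Finset.sum_congr rfl fun i _ => Finset.sum_comm
      _ = ∑ x₁ ∈ s, ∑ i : ι₁, ∑ j : ι₂, ∑ x₂ ∈ s, G i j x₁ x₂ := Finset.sum_comm
      _ = ∑ x₁ ∈ s, ∑ i : ι₁, ∑ x₂ ∈ s, ∑ j : ι₂, G i j x₁ x₂ :=
          Finset.sum_congr rfl fun x₁ _ => Finset.sum_congr rfl fun i _ => Finset.sum_comm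
      _ = ∑ x₁ ∈ s, ∑ x₂ ∈ s, ∑ i : ι₁, ∑ j : ι₂, G i j x₁ x₂ :=
          Finset.sum_congr rfl fun x₁ _ => Finset.sum_comm
  rw [swap]
  set I : ℝ := (Fintype.card ι₁ : ℝ) * Fintype.card ι₂ with hI
  have hIpos : 0 ≤ I := by positivity
  have hdiag : ∀ x : X, ∑ i : ι₁, ∑ j : ι₂, G i j x x = I := by
    intro x; simp [hG, hI, Finset.card_univ, mul_comm]
  have hoff : ∀ x₁ x₂ : X, x₁ ≠ x₂ → ∑ i : ι₁, ∑ j : ι₂, G i j x₁ x₂ ≤ (d1 + d2) * I :=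
    fun x₁ x₂ hne => my_pair_collision f₁ f₂ d1 d2 hd2 h₁ h₂ x₁ x₂ hne
  have hinner : ∀ x₁ ∈ s, ∑ x₂ ∈ s, ∑ i : ι₁, ∑ j : ι₂, G i j x₁ x₂
      ≤ I + (s.card : ℝ) * ((d1 + d2) * I) := by
    intro x₁ hx₁
    rw [← Finset.add_sum_erase s _ hx₁]
    refine add_le_add (le_of_eq (hdiag x₁)) ?_
    calc ∑ x₂ ∈ s.erase x₁, ∑ i : ι₁, ∑ j : ι₂, G i j x₁ x₂
        ≤ ∑ _x₂ ∈ s.erase x₁, (d1 + d2) * I :=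
          Finset.sum_le_sum fun x₂ hx₂ => hoff x₁ x₂ (Finset.ne_of_mem_erase hx₂).symm
      _ = ((s.erase x₁).card : ℝ) * ((d1 + d2) * I) := by rw [Finset.sum_const, nsmul_eq_mul]
      _ ≤ (s.card : ℝ) * ((d1 + d2) * I) := by
          refine mul_le_mul_of_nonneg_right ?_ (by positivity)
          exact_mod_cast Finset.card_le_card (Finset.erase_subset _ _)
  calc ∑ x₁ ∈ s, ∑ x₂ ∈ s, ∑ i : ι₁, ∑ j : ι₂, G i j x₁ x₂
      ≤ ∑ _x₁ ∈ s, (I + (s.card : ℝ) * ((d1 + d2) * I)) := Finset.sum_le_sum hinner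
    _ = (s.card : ℝ) * (I + (s.card : ℝ) * ((d1 + d2) * I)) := by
        rw [Finset.sum_const, nsmul_eq_mul]
    _ = ((s.card : ℝ) + (s.card : ℝ)^2 * (d1 + d2)) * I := by ring
lemma my_a_nonneg {Z : Type*} [Fintype Z] [Nonempty Z] (q : Z → ℝ)
    (hq : ∑ z : Z, q z = 1) :
    0 ≤ (Fintype.card Z : ℝ) * ∑ z : Z, (q z)^2 - 1 := by
  have hcs := Finset.sum_mul_sq_le_sq_mul_sq (univ : Finset Z) (fun _ => (1:ℝ)) q
  simp only [one_mul, one_pow, Finset.sum_const, Finset.card_univ, nsmul_eq_mul, mul_one] at hcs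
  rw [hq] at hcs
  norm_num at hcs
  linarith

/-- The average (over the eavesdropper's value `w` weighted by `c_w/|X|` and
over uniformly chosen hash functions) statistical distance between the output
distribution `q_{w,i,j}(z) = |{x : e x = w ∧ f₂ j (f₁ i x) = z}| / c_w` and the
uniform distribution on `Z`. -/
noncomputable def avgStatDist {X W Y Z ι₁ ι₂ : Type*}
    [Fintype X] [Fintype W] [Fintype Z] [Fintype ι₁] [Fintype ι₂]
    [DecidableEq W] [DecidableEq Z]
    (e : X → W) (f₁ : ι₁ → X → Y) (f₂ : ι₂ → Y → Z) : ℝ :=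
  ∑ w : W, (((univ.filter (fun x : X => e x = w)).card : ℝ) / Fintype.card X) *
    ((1 : ℝ) / ((Fintype.card ι₁ : ℝ) * Fintype.card ι₂)) *
    ∑ i : ι₁, ∑ j : ι₂, (1 / 2) * ∑ z : Z,
      |((univ.filter (fun x : X => e x = w ∧ f₂ j (f₁ i x) = z)).card : ℝ) /
          ((univ.filter (fun x : X => e x = w)).card : ℝ)
        - 1 / (Fintype.card Z : ℝ)|

set_option maxHeartbeats 1600000 in
/-- If `|X| = 2^n`, `|W| = 2^t`, `|Z| = 2^m` with `t + m ≤ n`, the families are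
δ₁- and δ₂-universal with `δ₂ ≤ 2^(−m)` and `δ₁ ≤ δ_g`, then the average
statistical distance of the output from uniform is at most
`(1/2)·√(2^(m+t−n) + 2^m·δ_g)`; in particular, with security coefficient
`s = n − t − m`, if `2^m·δ_g ≤ 2^(−s)` then the output key is ε-secure with
`ε ≤ 2^(−(s+1)/2)`. -/
theorem output_key_secure {X W Y Z ι₁ ι₂ : Type*}
    [Fintype X] [Nonempty X] [Fintype W] [Nonempty W] [Fintype Y]
    [Fintype Z] [Nonempty Z]
    [Fintype ι₁] [Nonempty ι₁] [Fintype ι₂] [Nonempty ι₂]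
    [DecidableEq W] [DecidableEq Y] [DecidableEq Z]
    (e : X → W) (he : Function.Surjective e)
    (f₁ : ι₁ → X → Y) (f₂ : ι₂ → Y → Z) (δ₁ δ₂ δg : ℝ)
    (h₁ : ∀ x₁ x₂ : X, x₁ ≠ x₂ →
      ((univ.filter (fun i : ι₁ => f₁ i x₁ = f₁ i x₂)).card : ℝ)
        ≤ δ₁ * Fintype.card ι₁)
    (h₂ : ∀ y₁ y₂ : Y, y₁ ≠ y₂ →
      ((univ.filter (fun j : ι₂ => f₂ j y₁ = f₂ j y₂)).card : ℝ)
        ≤ δ₂ * Fintype.card ι₂)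
    (n t m s : ℕ) (htm : t + m ≤ n) (hs : s = n - t - m)
    (hX : Fintype.card X = 2 ^ n) (hW : Fintype.card W = 2 ^ t)
    (hZ : Fintype.card Z = 2 ^ m)
    (hδ₂ : δ₂ ≤ (2 : ℝ) ^ (-(m : ℤ))) (hδg : 0 < δg) (hδ₁ : δ₁ ≤ δg) :
    avgStatDist e f₁ f₂
        ≤ (1 / 2) * Real.sqrt
            ((2 : ℝ) ^ ((m : ℤ) + t - n) + (2 : ℝ) ^ m * δg) ∧
    ((2 : ℝ) ^ m * δg ≤ (2 : ℝ) ^ (-(s : ℤ)) →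
      avgStatDist e f₁ f₂ ≤ (2 : ℝ) ^ (-(((s : ℝ) + 1) / 2))) := by
  classical
  -- basic positivity facts
  have hI1 : (0:ℝ) < (Fintype.card ι₁ : ℝ) := by exact_mod_cast Fintype.card_pos
  have hI2 : (0:ℝ) < (Fintype.card ι₂ : ℝ) := by exact_mod_cast Fintype.card_pos
  have hXC : (0:ℝ) < (Fintype.card X : ℝ) := by exact_mod_cast Fintype.card_pos
  have hNpos : (0:ℝ) < (Fintype.card Z : ℝ) := by exact_mod_cast Fintype.card_pos
  have hCpos : ∀ w : W, (0:ℝ) < ((univ.filter (fun x : X => e x = w)).card : ℝ) := by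
    intro w
    obtain ⟨x, hx⟩ := he w
    have hmem : x ∈ univ.filter (fun x : X => e x = w) := by simp [hx]
    exact_mod_cast Finset.card_pos.mpr ⟨x, hmem⟩
  -- nonnegative versions of δ₁, δ₂
  set d1 : ℝ := max δ₁ 0 with hd1def
  set d2 : ℝ := max δ₂ 0 with hd2def
  have hd1 : 0 ≤ d1 := le_max_right _ _
  have hd2 : 0 ≤ d2 := le_max_right _ _
  have h₁' : ∀ x₁ x₂ : X, x₁ ≠ x₂ →
      ((univ.filter (fun i : ι₁ => f₁ i x₁ = f₁ i x₂)).card : ℝ) ≤ d1 * Fintype.card ι₁ :=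
    fun x₁ x₂ h => (h₁ x₁ x₂ h).trans
      (mul_le_mul_of_nonneg_right (le_max_left _ _) hI1.le)
  have h₂' : ∀ y₁ y₂ : Y, y₁ ≠ y₂ →
      ((univ.filter (fun j : ι₂ => f₂ j y₁ = f₂ j y₂)).card : ℝ) ≤ d2 * Fintype.card ι₂ :=
    fun y₁ y₂ h => (h₂ y₁ y₂ h).trans
      (mul_le_mul_of_nonneg_right (le_max_left _ _) hI2.le)
  have hNcast : (Fintype.card Z : ℝ) = (2:ℝ)^(m:ℕ) := by rw [hZ]; push_cast; rfl
  have hXcast : (Fintype.card X : ℝ) = (2:ℝ)^(n:ℕ) := by rw [hX]; push_cast; rfl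
  have hWcast : (Fintype.card W : ℝ) = (2:ℝ)^(t:ℕ) := by rw [hW]; push_cast; rfl
  have hNd2 : (Fintype.card Z : ℝ) * d2 ≤ 1 := by
    have hd2' : d2 ≤ (2:ℝ)^(-(m:ℤ)) := max_le hδ₂ (by positivity)
    calc (Fintype.card Z : ℝ) * d2 ≤ (2:ℝ)^(m:ℕ) * (2:ℝ)^(-(m:ℤ)) := by
          rw [hNcast]
          exact mul_le_mul_of_nonneg_left hd2' (by positivity)
      _ = 1 := by
          rw [← zpow_natCast (2:ℝ) m, ← zpow_add₀ (by norm_num : (2:ℝ) ≠ 0)]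
          simp
  have hNd1 : (Fintype.card Z : ℝ) * d1 ≤ (2:ℝ)^m * δg := by
    rw [hNcast]
    exact mul_le_mul_of_nonneg_left (max_le hδ₁ hδg.le) (by positivity)
  -- the weights and quantities
  set lam : W × ι₁ × ι₂ → ℝ := fun k =>
    ((univ.filter (fun x : X => e x = k.1)).card : ℝ) / Fintype.card X
      * ((1:ℝ) / ((Fintype.card ι₁ : ℝ) * Fintype.card ι₂)) with hlamdef
  set SD : W × ι₁ × ι₂ → ℝ := fun k => (1/2) * ∑ z : Z,
      |((univ.filter (fun x : X => e x = k.1 ∧ f₂ k.2.2 (f₁ k.2.1 x) = z)).card : ℝ) /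
          ((univ.filter (fun x : X => e x = k.1)).card : ℝ) - 1 / (Fintype.card Z : ℝ)| with hSDdef
  set AA : W × ι₁ × ι₂ → ℝ := fun k =>
    (Fintype.card Z : ℝ) * (∑ z : Z,
      (((univ.filter (fun x : X => e x = k.1 ∧ f₂ k.2.2 (f₁ k.2.1 x) = z)).card : ℝ) /
        ((univ.filter (fun x : X => e x = k.1)).card : ℝ))^2) - 1 with hAAdef
  have hfilt : ∀ (w : W) (i : ι₁) (j : ι₂) (z : Z),
      (univ.filter (fun x : X => e x = w ∧ f₂ j (f₁ i x) = z))
        = (univ.filter (fun x : X => e x = w)).filter (fun x => f₂ j (f₁ i x) = z) := by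
    intro w i j z; rw [Finset.filter_filter]
  -- each q sums to 1
  have hq1 : ∀ (w : W) (i : ι₁) (j : ι₂),
      ∑ z : Z, ((univ.filter (fun x : X => e x = w ∧ f₂ j (f₁ i x) = z)).card : ℝ) /
          ((univ.filter (fun x : X => e x = w)).card : ℝ) = 1 := by
    intro w i j
    rw [← Finset.sum_div, div_eq_one_iff_eq (hCpos w).ne']
    rw [Finset.sum_congr rfl fun z (_ : z ∈ univ) => by rw [hfilt w i j z]]
    rw [← Nat.cast_sum, my_sum_fiber_card]
  -- flatten avgStatDist
  have hA : avgStatDist e f₁ f₂ = ∑ k : W × ι₁ × ι₂, lam k * SD k := by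
    rw [avgStatDist]
    rw [Fintype.sum_prod_type]
    refine Finset.sum_congr rfl fun w _ => ?_
    rw [Fintype.sum_prod_type, Finset.mul_sum]
    refine Finset.sum_congr rfl fun i _ => ?_
    rw [Finset.mul_sum]
  -- pointwise bound on SD
  have hSDle : ∀ k : W × ι₁ × ι₂, SD k ≤ (1/2) * Real.sqrt (AA k) := by
    rintro ⟨w, i, j⟩
    have := my_statdist_le (Z := Z) (fun z =>
      ((univ.filter (fun x : X => e x = w ∧ f₂ j (f₁ i x) = z)).card : ℝ) /
        ((univ.filter (fun x : X => e x = w)).card : ℝ)) (hq1 w i j)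
    exact mul_le_mul_of_nonneg_left this (by norm_num)
  have hAA0 : ∀ k : W × ι₁ × ι₂, 0 ≤ AA k := by
    rintro ⟨w, i, j⟩
    exact my_a_nonneg _ (hq1 w i j)
  have hlam0 : ∀ k : W × ι₁ × ι₂, 0 ≤ lam k := by
    rintro ⟨w, i, j⟩
    have := (hCpos w).le
    positivity
  -- sum of the weights is 1
  have hCsum : ∑ w : W, ((univ.filter (fun x : X => e x = w)).card : ℝ)
      = (Fintype.card X : ℝ) := by
    rw [← Finset.card_univ (α := X), ← my_sum_fiber_card e univ]
    push_cast; rfl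
  have hlamsum : ∑ k : W × ι₁ × ι₂, lam k = 1 := by
    rw [Fintype.sum_prod_type]
    have hw : ∀ w : W, ∑ p : ι₁ × ι₂, lam (w, p)
        = ((univ.filter (fun x : X => e x = w)).card : ℝ) / Fintype.card X := by
      intro w
      calc ∑ p : ι₁ × ι₂, lam (w, p)
          = ∑ _p : ι₁ × ι₂, (((univ.filter (fun x : X => e x = w)).card : ℝ) / Fintype.card X
              * ((1:ℝ) / ((Fintype.card ι₁ : ℝ) * Fintype.card ι₂))) :=
            Finset.sum_congr rfl (fun p _ => rfl)
        _ = (Fintype.card (ι₁ × ι₂) : ℕ) • (((univ.filter (fun x : X => e x = w)).card : ℝ)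
              / Fintype.card X * ((1:ℝ) / ((Fintype.card ι₁ : ℝ) * Fintype.card ι₂))) := by
            rw [Finset.sum_const, Finset.card_univ]
        _ = ((univ.filter (fun x : X => e x = w)).card : ℝ) / Fintype.card X := by
            rw [Fintype.card_prod, nsmul_eq_mul]
            push_cast
            field_simp
    rw [Finset.sum_congr rfl fun w _ => hw w, ← Finset.sum_div, hCsum,
      div_self hXC.ne']
  -- the collision bound per w
  have hkey : ∀ w : W, ((1:ℝ) / ((Fintype.card ι₁ : ℝ) * Fintype.card ι₂))
        * ∑ i : ι₁, ∑ j : ι₂, AA (w, i, j)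
      ≤ (Fintype.card Z : ℝ) / ((univ.filter (fun x : X => e x = w)).card : ℝ)
        + (Fintype.card Z : ℝ) * (d1 + d2) - 1 := by
    intro w
    have hC : (0:ℝ) < ((univ.filter (fun x : X => e x = w)).card : ℝ) := hCpos w
    have hcol := my_collision_sum f₁ f₂ d1 d2 hd1 hd2 h₁' h₂'
      (univ.filter (fun x : X => e x = w))
    have hAAw : ∀ (i : ι₁) (j : ι₂), AA (w, i, j)
        = (Fintype.card Z : ℝ) / ((univ.filter (fun x : X => e x = w)).card : ℝ)^2
            * (∑ z : Z, (((univ.filter (fun x : X => e x = w)).filter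
                (fun x => f₂ j (f₁ i x) = z)).card : ℝ)^2) - 1 := by
      intro i j
      simp only [hAAdef]
      rw [Finset.sum_congr rfl fun z (_ : z ∈ univ) => by rw [hfilt w i j z, div_pow]]
      rw [← Finset.sum_div]
      ring
    have expand : ∑ i : ι₁, ∑ j : ι₂, AA (w, i, j)
        = (Fintype.card Z : ℝ) / ((univ.filter (fun x : X => e x = w)).card : ℝ)^2
            * (∑ i : ι₁, ∑ j : ι₂, ∑ z : Z, (((univ.filter (fun x : X => e x = w)).filter
                (fun x => f₂ j (f₁ i x) = z)).card : ℝ)^2)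
          - (Fintype.card ι₁ : ℝ) * Fintype.card ι₂ := by
      rw [Finset.sum_congr rfl fun i (_ : i ∈ univ) =>
        Finset.sum_congr rfl fun j (_ : j ∈ univ) => hAAw i j]
      simp only [Finset.sum_sub_distrib, ← Finset.mul_sum, Finset.sum_const,
        Finset.card_univ, nsmul_eq_mul, mul_one]
    rw [expand]
    calc ((1:ℝ) / ((Fintype.card ι₁ : ℝ) * Fintype.card ι₂)) *
          ((Fintype.card Z : ℝ) / ((univ.filter (fun x : X => e x = w)).card : ℝ)^2
            * (∑ i : ι₁, ∑ j : ι₂, ∑ z : Z, (((univ.filter (fun x : X => e x = w)).filter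
                (fun x => f₂ j (f₁ i x) = z)).card : ℝ)^2)
            - (Fintype.card ι₁ : ℝ) * Fintype.card ι₂)
        ≤ ((1:ℝ) / ((Fintype.card ι₁ : ℝ) * Fintype.card ι₂)) *
          ((Fintype.card Z : ℝ) / ((univ.filter (fun x : X => e x = w)).card : ℝ)^2
            * ((((univ.filter (fun x : X => e x = w)).card : ℝ)
                + ((univ.filter (fun x : X => e x = w)).card : ℝ)^2 * (d1 + d2))
              * ((Fintype.card ι₁ : ℝ) * Fintype.card ι₂))
            - (Fintype.card ι₁ : ℝ) * Fintype.card ι₂) := by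
          refine mul_le_mul_of_nonneg_left (sub_le_sub_right
            (mul_le_mul_of_nonneg_left hcol (by positivity)) _) (by positivity)
      _ = (Fintype.card Z : ℝ) / ((univ.filter (fun x : X => e x = w)).card : ℝ)
            + (Fintype.card Z : ℝ) * (d1 + d2) - 1 := by
          field_simp
  -- combine: bound on ∑ lam * AA
  have hlamAA : ∑ k : W × ι₁ × ι₂, lam k * AA k
      ≤ (2:ℝ)^((m:ℤ) + t - n) + (2:ℝ)^m * δg := by
    have flat : ∑ k : W × ι₁ × ι₂, lam k * AA k
        = ∑ w : W, (((univ.filter (fun x : X => e x = w)).card : ℝ) / Fintype.card X) *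
            (((1:ℝ) / ((Fintype.card ι₁ : ℝ) * Fintype.card ι₂)) *
              ∑ i : ι₁, ∑ j : ι₂, AA (w, i, j)) := by
      simp only [Fintype.sum_prod_type, Finset.mul_sum]
      refine Finset.sum_congr rfl fun w _ => Finset.sum_congr rfl fun i _ =>
        Finset.sum_congr rfl fun j _ => ?_
      simp only [hlamdef]
      ring
    rw [flat]
    have step : ∑ w : W, (((univ.filter (fun x : X => e x = w)).card : ℝ) / Fintype.card X) *
          (((1:ℝ) / ((Fintype.card ι₁ : ℝ) * Fintype.card ι₂)) *
            ∑ i : ι₁, ∑ j : ι₂, AA (w, i, j))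
        ≤ ∑ w : W, ((Fintype.card Z : ℝ) / Fintype.card X
            + (((univ.filter (fun x : X => e x = w)).card : ℝ) / Fintype.card X) *
              ((Fintype.card Z : ℝ) * (d1 + d2) - 1)) := by
      refine Finset.sum_le_sum fun w _ => ?_
      have h1 := hkey w
      have hC := hCpos w
      calc (((univ.filter (fun x : X => e x = w)).card : ℝ) / Fintype.card X) *
            (((1:ℝ) / ((Fintype.card ι₁ : ℝ) * Fintype.card ι₂)) *
              ∑ i : ι₁, ∑ j : ι₂, AA (w, i, j))
          ≤ (((univ.filter (fun x : X => e x = w)).card : ℝ) / Fintype.card X) *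
              ((Fintype.card Z : ℝ) / ((univ.filter (fun x : X => e x = w)).card : ℝ)
                + (Fintype.card Z : ℝ) * (d1 + d2) - 1) :=
            mul_le_mul_of_nonneg_left h1 (by positivity)
        _ = (Fintype.card Z : ℝ) / Fintype.card X
            + (((univ.filter (fun x : X => e x = w)).card : ℝ) / Fintype.card X) *
              ((Fintype.card Z : ℝ) * (d1 + d2) - 1) := by
            field_simp
            ring
    refine step.trans ?_
    have split : ∑ w : W, ((Fintype.card Z : ℝ) / Fintype.card X
          + (((univ.filter (fun x : X => e x = w)).card : ℝ) / Fintype.card X) *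
            ((Fintype.card Z : ℝ) * (d1 + d2) - 1))
        = (Fintype.card W : ℝ) * ((Fintype.card Z : ℝ) / Fintype.card X)
          + ((Fintype.card Z : ℝ) * (d1 + d2) - 1) := by
      rw [Finset.sum_add_distrib]
      congr 1
      · rw [Finset.sum_const, Finset.card_univ, nsmul_eq_mul]
      · rw [← Finset.sum_mul, ← Finset.sum_div, hCsum, div_self hXC.ne', one_mul]
    rw [split]
    have e1 : (Fintype.card W : ℝ) * ((Fintype.card Z : ℝ) / Fintype.card X)
        = (2:ℝ)^((m:ℤ) + t - n) := by
      rw [hWcast, hNcast, hXcast, ← zpow_natCast (2:ℝ) m, ← zpow_natCast (2:ℝ) t,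
        ← zpow_natCast (2:ℝ) n, ← zpow_sub₀ (by norm_num : (2:ℝ) ≠ 0),
        ← zpow_add₀ (by norm_num : (2:ℝ) ≠ 0)]
      congr 1
      ring
    rw [e1]
    have : (Fintype.card Z : ℝ) * (d1 + d2) - 1 ≤ (2:ℝ)^m * δg := by
      have hexp : (Fintype.card Z : ℝ) * (d1 + d2)
          = (Fintype.card Z : ℝ) * d1 + (Fintype.card Z : ℝ) * d2 := by ring
      linarith
    linarith
  -- main bound
  have main : avgStatDist e f₁ f₂
      ≤ (1/2) * Real.sqrt ((2:ℝ)^((m:ℤ) + t - n) + (2:ℝ)^m * δg) := by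
    calc avgStatDist e f₁ f₂ = ∑ k : W × ι₁ × ι₂, lam k * SD k := hA
      _ ≤ ∑ k : W × ι₁ × ι₂, lam k * ((1/2) * Real.sqrt (AA k)) :=
          Finset.sum_le_sum fun k _ => mul_le_mul_of_nonneg_left (hSDle k) (hlam0 k)
      _ = (1/2) * ∑ k : W × ι₁ × ι₂, lam k * Real.sqrt (AA k) := by
          rw [Finset.mul_sum]
          exact Finset.sum_congr rfl fun k _ => by ring
      _ ≤ (1/2) * Real.sqrt (∑ k : W × ι₁ × ι₂, lam k * AA k) := by
          refine mul_le_mul_of_nonneg_left ?_ (by norm_num)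
          exact my_sum_sqrt_le univ lam AA (fun k _ => hlam0 k) (fun k _ => hAA0 k)
            (le_of_eq hlamsum)
      _ ≤ (1/2) * Real.sqrt ((2:ℝ)^((m:ℤ) + t - n) + (2:ℝ)^m * δg) :=
          mul_le_mul_of_nonneg_left (Real.sqrt_le_sqrt hlamAA) (by norm_num)
  refine ⟨main, fun hsm => ?_⟩
  have hsZ : (m:ℤ) + t - n = -(s:ℤ) := by omega
  calc avgStatDist e f₁ f₂
      ≤ (1/2) * Real.sqrt ((2:ℝ)^((m:ℤ) + t - n) + (2:ℝ)^m * δg) := main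
    _ ≤ (1/2) * Real.sqrt ((2:ℝ)^((1:ℤ) - s)) := by
        refine mul_le_mul_of_nonneg_left (Real.sqrt_le_sqrt ?_) (by norm_num)
        rw [hsZ]
        have : (2:ℝ)^((1:ℤ) - s) = (2:ℝ)^(-(s:ℤ)) + (2:ℝ)^(-(s:ℤ)) := by
          rw [zpow_sub₀ (by norm_num : (2:ℝ) ≠ 0)]
          rw [zpow_neg, zpow_one]
          ring
        rw [this]
        linarith
    _ = (2:ℝ) ^ (-(((s:ℝ) + 1) / 2)) := by
        rw [show ((2:ℝ)^((1:ℤ) - s)) = (2:ℝ) ^ ((((1:ℤ) - s : ℤ)) : ℝ) from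
          (Real.rpow_intCast 2 _).symm]
        rw [Real.sqrt_eq_rpow, ← Real.rpow_mul (by norm_num : (0:ℝ) ≤ 2)]
        rw [show (1:ℝ)/2 = (2:ℝ) ^ (-1 : ℝ) from by
          rw [Real.rpow_neg_one]; norm_num]
        rw [← Real.rpow_add (by norm_num : (0:ℝ) < 2)]
        congr 1
        push_cast
        ring
end

section
/- Let p be a prime, k ≥ 1 an integer, and α > β ≥ 1 integers with p ≤ 2^α. Consider the composed MMH-MH family of functions from (ZMod p)^k to {0,…,2^β−1}, indexed by triples (a, b, c) with a ∈ (ZMod p)^k and b, c ∈ {0,…,2^α−1}, b odd, given by x ↦ ⌊((b·(g_a(x)).val + c) mod 2^α)/2^(α−β)⌋, where g_a(x) = Σ_{i=1}^k a_i·x_i in ZMod p and (·).val ∈ {0,…,p−1} is the natural-number representative. This family is (1/p + 2^(−β))-universal: for every pair of distinct x, y ∈ (ZMod p)^k, the fraction of index triples (a,b,c) producing a collision is at most 1/p + 2^(−β). -/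
open Finset

/-!
`gₐ x = gₐ y` exactly when `a` lies in the kernel of the nonzero functional `a ↦ a ⬝ᵥ (x - y)`,
a `1/p` fraction of all `a`. Otherwise the MH inputs `u ≠ v` are below `2^α`; write
`u - v = 2^j w` with `w` odd. A collision of `h_{b,c}` on `u, v` gives the pair
`s = (b v + c) mod 2^α`, `t = (b u + c) mod 2^α` in one block of length `2^(α-β)` with
`t ≡ s + b (u - v) (mod 2^α)`, and `(s, t, b)` determines `c`. For odd `b` this forces
`t ≡ s + 2^j (mod 2^(j+1))`, which holds for at most a `2^-(j+1)` fraction of each block, while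
each pair `(s, t)` comes from at most `2^j` odd `b`. So at most `2^α * 2^(α-β) / 2` of the
`2^(2α-1)` pairs `(b, c)` collide.
-/

theorem card_filter_product_eq_sum {α β : Type*} (s : Finset α) (t : Finset β) (p : α × β → Prop)
    [DecidablePred p] : #{x ∈ s ×ˢ t | p x} = ∑ a ∈ s, #{b ∈ t | p (a, b)} := by
  simp only [card_filter, sum_product]

theorem card_filter_range_two_mul_odd (n : ℕ) : #{b ∈ range (2 * n) | Odd b} = n := by
  have h := Nat.count_modEq_card (2 * n) two_pos 1
  rw [Nat.count_eq_card_filter_range] at h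
  simpa [Nat.ModEq, ← Nat.odd_iff] using h

theorem card_filter_dotProduct_eq_zero_mul_card {F ι : Type*} [Field F] [Fintype F]
    [DecidableEq F] [Fintype ι] [DecidableEq ι] {z : ι → F} (hz : z ≠ 0) :
    #{a : ι → F | a ⬝ᵥ z = 0} * Fintype.card F = Fintype.card F ^ Fintype.card ι := by
  let f : (ι → F) →+ F :=
    { toFun := (· ⬝ᵥ z), map_zero' := zero_dotProduct z
      map_add' := fun a b => add_dotProduct a b z }
  obtain ⟨i, hi⟩ := Function.ne_iff.mp hz
  have hf : Function.Surjective f := fun c =>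
    ⟨Pi.single i (c / z i), by simp [f, single_dotProduct, div_mul_cancel₀ c hi]⟩
  have hfibers : ∀ c, #{a | f a = c} = #{a | f a = 0} := fun c =>
    AddMonoidHom.card_fiber_eq_of_mem_range f (hf c) (hf 0)
  calc #{a : ι → F | a ⬝ᵥ z = 0} * Fintype.card F = ∑ c : F, #{a | f a = c} := by
        rw [sum_congr rfl fun c _ => hfibers c, sum_const, card_univ, smul_eq_mul, mul_comm]
        rfl
    _ = Fintype.card F ^ Fintype.card ι := by
        rw [← card_eq_sum_card_fiberwise fun _ _ => mem_coe.mpr (mem_univ _), card_univ,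
          Fintype.card_fun]

section MulShift

variable {j e w : ℕ}

theorem Nat.ModEq.cancel_two_pow_mul_odd (hw : Odd w) {b b' : ℕ}
    (h : b * (2 ^ j * w) ≡ b' * (2 ^ j * w) [MOD 2 ^ (j + e)]) : b ≡ b' [MOD 2 ^ e] := by
  rw [pow_add, mul_left_comm, mul_left_comm b'] at h
  exact Nat.ModEq.cancel_right_of_coprime (Nat.Coprime.pow_left e (Nat.coprime_two_left.mpr hw))
    (Nat.ModEq.mul_left_cancel' (by positivity) h)

theorem card_filter_add_mul_modEq_le (hw : Odd w) (x y : ℕ) :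
    #{b ∈ range (2 ^ (j + e)) | x + b * (2 ^ j * w) ≡ y [MOD 2 ^ (j + e)]} ≤ 2 ^ j := by
  calc _ ≤ #(range (2 ^ j)) := by
        refine card_le_card_of_injOn (· / 2 ^ e) (fun b hb => ?_) (fun b hb b' hb' hdiv => ?_)
        · simp only [coe_filter, mem_range, Set.mem_ofPred_eq, coe_range, Set.mem_Iio] at hb ⊢
          exact Nat.div_lt_of_lt_mul (by rw [← pow_add, add_comm]; exact hb.1)
        · simp only [coe_filter, mem_range, Set.mem_ofPred_eq] at hb hb' hdiv
          have hmod : b % 2 ^ e = b' % 2 ^ e :=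
            (Nat.ModEq.add_left_cancel' x (hb.2.trans hb'.2.symm)).cancel_two_pow_mul_odd hw
          rw [← Nat.div_add_mod b (2 ^ e), ← Nat.div_add_mod b' (2 ^ e), hdiv, hmod]
    _ = 2 ^ j := card_range _

theorem modEq_add_two_pow_of_add_odd_mul_modEq (hw : Odd w) (he : e ≠ 0) {b x y : ℕ}
    (hb : Odd b) (h : x + b * (2 ^ j * w) ≡ y [MOD 2 ^ (j + e)]) :
    y ≡ x + 2 ^ j [MOD 2 ^ (j + 1)] := by
  obtain ⟨t, ht⟩ := hb.mul hw
  have hsplit : x + b * (2 ^ j * w) = x + 2 ^ j + 2 ^ (j + 1) * t := by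
    rw [mul_left_comm, ht, pow_succ]; ring
  rw [hsplit] at h
  exact (h.of_dvd (pow_dvd_pow 2 (by omega))).symm.trans
    (Nat.add_mul_mod_self_left (x + 2 ^ j) (2 ^ (j + 1)) t)

theorem card_filter_odd_add_mul_modEq_le (hw : Odd w) (he : e ≠ 0) (x y : ℕ) :
    #{b ∈ range (2 ^ (j + e)) | Odd b ∧ x + b * (2 ^ j * w) ≡ y [MOD 2 ^ (j + e)]}
      ≤ if y ≡ x + 2 ^ j [MOD 2 ^ (j + 1)] then 2 ^ j else 0 := by
  split_ifs with hxy
  · exact (card_le_card fun b hb => by simp only [mem_filter] at hb ⊢; exact ⟨hb.1, hb.2.2⟩).trans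
      (card_filter_add_mul_modEq_le hw x y)
  · rw [Nat.le_zero, card_eq_zero, filter_eq_empty_iff]
    exact fun b _ hb => hxy (modEq_add_two_pow_of_add_odd_mul_modEq hw he hb.1 hb.2)

theorem not_modEq_add_two_pow_of_div_eq {γ x y : ℕ} (hγj : γ ≤ j)
    (hdiv : y / 2 ^ γ = x / 2 ^ γ) : ¬y ≡ x + 2 ^ j [MOD 2 ^ (j + 1)] := by
  intro hmod
  have hmodγ : y % 2 ^ γ = x % 2 ^ γ :=
    (hmod.of_dvd (pow_dvd_pow 2 (by omega))).trans
      (by simpa using (Nat.modEq_zero_iff_dvd.mpr (pow_dvd_pow 2 hγj)).add_left x)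
  have hyx : y = x := by rw [← Nat.div_add_mod y (2 ^ γ), hdiv, hmodγ, Nat.div_add_mod]
  subst hyx
  have h0 : 0 ≡ 2 ^ j [MOD 2 ^ (j + 1)] := Nat.ModEq.add_left_cancel' y (by simpa using hmod)
  rw [Nat.ModEq, Nat.zero_mod, Nat.mod_eq_of_lt (Nat.pow_lt_pow_succ one_lt_two)] at h0
  exact absurd h0.symm (by positivity)

theorem two_pow_succ_mul_card_filter_div_eq_modEq_le (γ N x : ℕ) :
    2 ^ (j + 1) * #{y ∈ range N | y / 2 ^ γ = x / 2 ^ γ ∧ y ≡ x + 2 ^ j [MOD 2 ^ (j + 1)]}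
      ≤ 2 ^ γ := by
  rcases le_or_gt γ j with hγj | hjγ
  · rw [filter_false_of_mem fun y _ h => not_modEq_add_two_pow_of_div_eq hγj h.1 h.2]
    simp
  have hdvd : 2 ^ (j + 1) ∣ 2 ^ γ := pow_dvd_pow 2 hjγ
  -- `y` is recovered from its block, its residue mod `2 ^ (j + 1)` (the same for all such `y`)
  -- and the index of its sub-block of length `2 ^ (j + 1)`
  calc _ ≤ 2 ^ (j + 1) * #(range (2 ^ γ / 2 ^ (j + 1))) := by
        refine Nat.mul_le_mul_left _ <| card_le_card_of_injOn (fun y => y % 2 ^ γ / 2 ^ (j + 1))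
          (fun y _ => ?_) (fun y hy y' hy' hsub => ?_)
        · simp only [coe_range, Set.mem_Iio]
          exact Nat.div_lt_div_of_lt_of_dvd hdvd (Nat.mod_lt _ (by positivity))
        · simp only [coe_filter, mem_range, Set.mem_ofPred_eq] at hy hy' hsub
          have hmod : y % 2 ^ γ % 2 ^ (j + 1) = y' % 2 ^ γ % 2 ^ (j + 1) := by
            rw [Nat.mod_mod_of_dvd _ hdvd, Nat.mod_mod_of_dvd _ hdvd]
            exact hy.2.2.trans hy'.2.2.symm
          have hmodγ : y % 2 ^ γ = y' % 2 ^ γ := by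
            rw [← Nat.div_add_mod (y % 2 ^ γ) (2 ^ (j + 1)), hsub, hmod, Nat.div_add_mod]
          rw [← Nat.div_add_mod y (2 ^ γ), ← Nat.div_add_mod y' (2 ^ γ), hy.2.1, hy'.2.1, hmodγ]
    _ = 2 ^ γ := by rw [card_range, Nat.mul_div_cancel' hdvd]

end MulShift

theorem card_filter_mod_div_eq_le_card_filter_add_mul_modEq {N m v d : ℕ} (hN : 0 < N) :
    #{bc ∈ (range N ×ˢ range N).filter (fun bc : ℕ × ℕ => Odd bc.1) |
        (bc.1 * (v + d) + bc.2) % N / m = (bc.1 * v + bc.2) % N / m}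
      ≤ #{t ∈ (range N ×ˢ range N).filter (fun xy : ℕ × ℕ => xy.2 / m = xy.1 / m) ×ˢ range N |
          Odd t.2 ∧ t.1.1 + t.2 * d ≡ t.1.2 [MOD N]} := by
  refine card_le_card_of_injOn
    (fun bc => (((bc.1 * v + bc.2) % N, (bc.1 * (v + d) + bc.2) % N), bc.1))
    (fun bc hbc => ?_) (fun bc hbc bc' hbc' h => ?_)
  · simp only [mem_coe, mem_filter, mem_product, mem_range] at hbc ⊢
    refine ⟨⟨⟨⟨Nat.mod_lt _ hN, Nat.mod_lt _ hN⟩, hbc.2⟩, hbc.1.1.1⟩, hbc.1.2, ?_⟩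
    calc (bc.1 * v + bc.2) % N + bc.1 * d ≡ bc.1 * v + bc.2 + bc.1 * d [MOD N] :=
          (Nat.mod_modEq _ N).add_right _
      _ = bc.1 * (v + d) + bc.2 := by ring
      _ ≡ (bc.1 * (v + d) + bc.2) % N [MOD N] := (Nat.mod_modEq _ N).symm
  · simp only [mem_coe, mem_filter, mem_product, mem_range, Prod.mk.injEq] at hbc hbc' h
    obtain ⟨⟨hx, -⟩, hb⟩ := h
    rw [hb] at hx
    have hc : bc.2 ≡ bc'.2 [MOD N] := Nat.ModEq.add_left_cancel' _ hx
    rw [Nat.ModEq, Nat.mod_eq_of_lt hbc.1.1.2, Nat.mod_eq_of_lt hbc'.1.1.2] at hc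
    exact Prod.ext hb hc

theorem two_mul_card_filter_mulShift_eq_le {α γ u v : ℕ} (hu : u < 2 ^ α) (hv : v < 2 ^ α)
    (huv : u ≠ v) :
    2 * #{bc ∈ (range (2 ^ α) ×ˢ range (2 ^ α)).filter (fun bc : ℕ × ℕ => Odd bc.1) |
        (bc.1 * u + bc.2) % 2 ^ α / 2 ^ γ = (bc.1 * v + bc.2) % 2 ^ α / 2 ^ γ}
      ≤ 2 ^ α * 2 ^ γ := by
  wlog hvu : v < u generalizing u v
  · simpa only [eq_comm] using this hv hu huv.symm (by omega)
  obtain ⟨d, rfl⟩ : ∃ d, u = v + d := ⟨u - v, by omega⟩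
  obtain ⟨j, w, hw2, rfl⟩ := Nat.exists_eq_pow_mul_and_not_dvd (by omega : d ≠ 0) 2 (by norm_num)
  have hw : Odd w := Nat.odd_iff.mpr (Nat.two_dvd_ne_zero.mp hw2)
  have hj : j < α := by
    have : 2 ^ j < 2 ^ α := by nlinarith [hw.pos]
    exact (Nat.pow_lt_pow_iff_right (by norm_num)).mp this
  obtain ⟨e, rfl⟩ : ∃ e, α = j + e := ⟨α - j, by omega⟩
  set N := 2 ^ (j + e)
  set Pairs := (range N ×ˢ range N).filter (fun xy : ℕ × ℕ => xy.2 / 2 ^ γ = xy.1 / 2 ^ γ)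
  calc _ ≤ 2 * #{t ∈ Pairs ×ˢ range N | Odd t.2 ∧ t.1.1 + t.2 * (2 ^ j * w) ≡ t.1.2 [MOD N]} :=
        Nat.mul_le_mul_left _ (card_filter_mod_div_eq_le_card_filter_add_mul_modEq (by positivity))
    _ = 2 * ∑ xy ∈ Pairs, #{b ∈ range N | Odd b ∧ xy.1 + b * (2 ^ j * w) ≡ xy.2 [MOD N]} := by
        rw [card_filter_product_eq_sum]
    _ ≤ 2 * ∑ xy ∈ Pairs, if xy.2 ≡ xy.1 + 2 ^ j [MOD 2 ^ (j + 1)] then 2 ^ j else 0 := by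
        gcongr with xy
        exact card_filter_odd_add_mul_modEq_le hw (by omega) _ _
    _ = ∑ x ∈ range N, 2 ^ (j + 1) *
          #{y ∈ range N | y / 2 ^ γ = x / 2 ^ γ ∧ y ≡ x + 2 ^ j [MOD 2 ^ (j + 1)]} := by
        rw [← sum_filter, sum_const, smul_eq_mul, filter_filter, card_filter_product_eq_sum,
          ← mul_sum, pow_succ]
        ring
    _ ≤ ∑ _x ∈ range N, 2 ^ γ :=
        sum_le_sum fun x _ => two_pow_succ_mul_card_filter_div_eq_modEq_le γ N x
    _ = N * 2 ^ γ := by rw [sum_const, card_range, smul_eq_mul]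

theorem card_filter_mulShift_val_eq_le {p α γ : ℕ} [NeZero p] (hpα : p ≤ 2 ^ α) (s t : ZMod p) :
    (#{bc ∈ (range (2 ^ α) ×ˢ range (2 ^ α)).filter (fun bc : ℕ × ℕ => Odd bc.1) |
        (bc.1 * s.val + bc.2) % 2 ^ α / 2 ^ γ = (bc.1 * t.val + bc.2) % 2 ^ α / 2 ^ γ} : ℝ)
      ≤ (if s = t then (#{bc ∈ range (2 ^ α) ×ˢ range (2 ^ α) | Odd bc.1} : ℝ) else 0)
        + 2 ^ α * 2 ^ γ / 2 := by
  split_ifs with hst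
  · exact le_add_of_le_of_nonneg (by exact_mod_cast card_filter_le _ _) (by positivity)
  · have h := two_mul_card_filter_mulShift_eq_le (γ := γ) ((ZMod.val_lt s).trans_le hpα)
      ((ZMod.val_lt t).trans_le hpα) (ZMod.val_injective p |>.ne hst)
    rw [zero_add, le_div_iff₀ two_pos, mul_comm]
    exact_mod_cast h

theorem mmh_mh_universal_general (p k α β : ℕ) [Fact p.Prime]
    (hβα : β < α) (hpα : p ≤ 2 ^ α)
    (x y : Fin k → ZMod p) (hxy : x ≠ y) :
    ((((Finset.univ : Finset (Fin k → ZMod p)) ×ˢ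
        ((Finset.range (2 ^ α) ×ˢ Finset.range (2 ^ α)).filter
          (fun bc : ℕ × ℕ => Odd bc.1))).filter
        (fun abc : (Fin k → ZMod p) × (ℕ × ℕ) =>
          (abc.2.1 * (∑ i, abc.1 i * x i).val + abc.2.2) % 2 ^ α / 2 ^ (α - β)
            = (abc.2.1 * (∑ i, abc.1 i * y i).val + abc.2.2) % 2 ^ α
                / 2 ^ (α - β))).card : ℝ)
      ≤ (1 / (p : ℝ) + (2 : ℝ) ^ (-(β : ℤ))) *
          ((p : ℝ) ^ k * 2 ^ (2 * α - 1)) := by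
  set B := (range (2 ^ α) ×ˢ range (2 ^ α)).filter (fun bc : ℕ × ℕ => Odd bc.1)
  set K := #{a : Fin k → ZMod p | a ⬝ᵥ x = a ⬝ᵥ y}
  have hB : #B = 2 ^ (α - 1) * 2 ^ α := by
    rw [show B = _ from filter_product_left _, card_product, card_range,
      show α = α - 1 + 1 by omega, pow_succ', card_filter_range_two_mul_odd, Nat.add_sub_cancel]
  have hK : (K : ℝ) * p = p ^ k := by
    have h := card_filter_dotProduct_eq_zero_mul_card (sub_ne_zero.mpr hxy)
    simp only [dotProduct_sub, sub_eq_zero, ZMod.card, Fintype.card_fin] at h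
    exact_mod_cast h
  rw [card_filter_product_eq_sum, Nat.cast_sum]
  calc _ ≤ ∑ a : Fin k → ZMod p,
        ((if a ⬝ᵥ x = a ⬝ᵥ y then (#B : ℝ) else 0) + 2 ^ α * 2 ^ (α - β) / 2) :=
        sum_le_sum fun a _ => card_filter_mulShift_val_eq_le hpα _ _
    _ = K * #B + p ^ k * (2 ^ α * 2 ^ (α - β) / 2) := by
        rw [sum_add_distrib, ← sum_filter, sum_const, sum_const, card_univ, Fintype.card_fun,
          ZMod.card, Fintype.card_fin, nsmul_eq_mul, nsmul_eq_mul]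
        push_cast; ring
    _ = _ := by
        have hα : (2 : ℝ) ^ α = 2 * 2 ^ (α - 1) := by rw [← pow_succ']; congr 1; omega
        have hβ : (2 : ℝ) ^ α = 2 ^ (α - β) * 2 ^ β := by rw [← pow_add]; congr 1; omega
        have hp : (p : ℝ) ≠ 0 := Nat.cast_ne_zero.mpr (Fact.out : p.Prime).ne_zero
        have h2α : (2 : ℝ) ^ (2 * α - 1) = 2 ^ (α - 1) * 2 ^ α := by rw [← pow_add]; congr 1; omega
        rw [hB, ← hK, h2α, zpow_neg, zpow_natCast]
        push_cast
        field_simp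
        linear_combination (K * p : ℝ) * (hα - hβ)

/-- The composed MMH-MH family is `(1/p + 2^(−β))`-universal: for a prime
`p ≤ 2^α`, `k ≥ 1` and `α > β ≥ 1`, for any two distinct inputs
`x y : Fin k → ZMod p`, the number of index triples `(a, b, c)` (with
`a ∈ (ZMod p)^k`, `b, c ∈ {0, …, 2^α − 1}`, `b` odd) such that
`⌊((b·(gₐ x).val + c) mod 2^α)/2^(α−β)⌋ = ⌊((b·(gₐ y).val + c) mod 2^α)/2^(α−β)⌋`,
where `gₐ x = ∑ i, a i * x i`, is at most `(1/p + 2^(−β))` times the size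
`p^k · 2^(2α−1)` of the index set. -/
theorem mmh_mh_universal (p k α β : ℕ) [Fact p.Prime] (hk : 1 ≤ k)
    (hβ : 1 ≤ β) (hβα : β < α) (hpα : p ≤ 2 ^ α)
    (x y : Fin k → ZMod p) (hxy : x ≠ y) :
    ((((Finset.univ : Finset (Fin k → ZMod p)) ×ˢ
        ((Finset.range (2 ^ α) ×ˢ Finset.range (2 ^ α)).filter
          (fun bc : ℕ × ℕ => Odd bc.1))).filter
        (fun abc : (Fin k → ZMod p) × (ℕ × ℕ) =>
          (abc.2.1 * (∑ i, abc.1 i * x i).val + abc.2.2) % 2 ^ α / 2 ^ (α - β)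
            = (abc.2.1 * (∑ i, abc.1 i * y i).val + abc.2.2) % 2 ^ α
                / 2 ^ (α - β))).card : ℝ)
      ≤ (1 / (p : ℝ) + (2 : ℝ) ^ (-(β : ℤ))) *
          ((p : ℝ) ^ k * 2 ^ (2 * α - 1)) :=
  mmh_mh_universal_general p k α β hβα hpα x y hxy
end
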